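/- arXiv:2101.07159 — 3 statements merged into one kernel-verified Lean document; each statement's English description precedes it below -/
import Mathlib

section
/- There exist 3×3 real matrices A, B such that the nine matrices I, A, A², B, B², AB, BA, [A,[A,B]], [B,[B,A]] form a basis of M₃(ℝ); in particular the unital subalgebra generated by A and B is all of M₃(ℝ). (E.g., δ = ε = 1 in the family A = [[1,0,1],[0,−1,δ],[1,0,1]], B = [[−1,0,1],[0,1,0],[1,ε,−1]].) -/
set_option maxHeartbeats 1000000

open Matrix Polynomial

/-- Determinant of the 9×9 matrix whose columns are the vectorizations of nine 3×3 matrices. -/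
noncomputable def vecDet {K : Type*} [CommRing K]
    (v : Fin 9 → Matrix (Fin 3) (Fin 3) K) : K :=
  Matrix.det (Matrix.of fun p q : Fin 3 × Fin 3 =>
    v (finProdFinEquiv q) p.1 p.2)

/-- H(M) = (tr(M)² − tr(M²))/2. -/
noncomputable def Hm {K : Type*} [Field K] (M : Matrix (Fin 3) (Fin 3) K) : K :=
  (Matrix.trace M ^ 2 - Matrix.trace (M * M)) / 2

/-- The nine matrices I, A, A², B, B², AB, BA, [A,[A,B]], [B,[B,A]]. -/
def nine {K : Type*} [CommRing K] (A B : Matrix (Fin 3) (Fin 3) K) :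
    Fin 9 → Matrix (Fin 3) (Fin 3) K :=
  ![1, A, A ^ 2, B, B ^ 2, A * B, B * A,
    A * (A * B - B * A) - (A * B - B * A) * A,
    B * (B * A - A * B) - (B * A - A * B) * B]

theorem stmt_11_aux :
    ∃ A B : Matrix (Fin 3) (Fin 3) ℝ,
      LinearIndependent ℝ (nine A B) := by
  refine ⟨!![1,0,1;0,-1,1;1,0,1], !![(-1),0,1;0,1,0;1,1,-1], ?_⟩
  set A : Matrix (Fin 3) (Fin 3) ℝ := !![1,0,1;0,-1,1;1,0,1] with hA
  set B : Matrix (Fin 3) (Fin 3) ℝ := !![(-1),0,1;0,1,0;1,1,-1] with hB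
  rw [Fintype.linearIndependent_iff]
  intro g hg
  have hg' : g 0 • (1 : Matrix (Fin 3) (Fin 3) ℝ) + (g 1 • A + (g 2 • (A^2) +
      (g 3 • B + (g 4 • (B^2) + (g 5 • (A*B) + (g 6 • (B*A) +
      (g 7 • (A * (A * B - B * A) - (A * B - B * A) * A) +
      (g 8 • (B * (B * A - A * B) - (B * A - A * B) * B) + 0)))))))) = 0 := hg
  have h00 := congrFun (congrFun hg' 0) 0
  have h01 := congrFun (congrFun hg' 0) 1
  have h02 := congrFun (congrFun hg' 0) 2
  have h10 := congrFun (congrFun hg' 1) 0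
  have h11 := congrFun (congrFun hg' 1) 1
  have h12 := congrFun (congrFun hg' 1) 2
  have h20 := congrFun (congrFun hg' 2) 0
  have h21 := congrFun (congrFun hg' 2) 1
  have h22 := congrFun (congrFun hg' 2) 2
  simp [hA, hB, Matrix.mul_apply, pow_two, Matrix.one_fin_three, Fin.sum_univ_succ,
    Matrix.vecHead, Matrix.vecTail, Function.comp]
    at h00 h01 h02 h10 h11 h12 h20 h21 h22
  intro i
  fin_cases i <;> simp only [Fin.reduceFinMk, Fin.isValue] <;>
    linarith [h00, h01, h02, h10, h11, h12, h20, h21, h22]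

theorem stmt_11 :
    ∃ A B : Matrix (Fin 3) (Fin 3) ℝ,
      LinearIndependent ℝ (nine A B) ∧
      Submodule.span ℝ (Set.range (nine A B)) = ⊤ ∧
      Algebra.adjoin ℝ {A, B} = (⊤ : Subalgebra ℝ (Matrix (Fin 3) (Fin 3) ℝ)) := by
  obtain ⟨A, B, hli⟩ := stmt_11_aux
  have hcard : Fintype.card (Fin 9) = Module.finrank ℝ (Matrix (Fin 3) (Fin 3) ℝ) := by
    simp [Module.finrank_matrix]
  have hb := coe_basisOfLinearIndependentOfCardEqFinrank hli hcard
  have hsp : Submodule.span ℝ (Set.range (nine A B)) = ⊤ := by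
    rw [← hb]
    exact (basisOfLinearIndependentOfCardEqFinrank hli hcard).span_eq
  refine ⟨A, B, hli, hsp, ?_⟩
  have hA : A ∈ Algebra.adjoin ℝ ({A, B} : Set (Matrix (Fin 3) (Fin 3) ℝ)) :=
    Algebra.subset_adjoin (by simp)
  have hB : B ∈ Algebra.adjoin ℝ ({A, B} : Set (Matrix (Fin 3) (Fin 3) ℝ)) :=
    Algebra.subset_adjoin (by simp)
  have hmem : ∀ i, nine A B i ∈ Algebra.adjoin ℝ ({A, B} : Set (Matrix (Fin 3) (Fin 3) ℝ)) := by
    intro i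
    fin_cases i <;> simp only [nine, Matrix.cons_val_zero, Matrix.cons_val_one, Matrix.head_cons] <;>
      first
        | exact one_mem _
        | exact hA
        | exact pow_mem hA 2
        | exact hB
        | exact pow_mem hB 2
        | exact mul_mem hA hB
        | exact mul_mem hB hA
        | exact sub_mem (mul_mem hA (sub_mem (mul_mem hA hB) (mul_mem hB hA)))
            (mul_mem (sub_mem (mul_mem hA hB) (mul_mem hB hA)) hA)
        | exact sub_mem (mul_mem hB (sub_mem (mul_mem hB hA) (mul_mem hA hB)))
            (mul_mem (sub_mem (mul_mem hB hA) (mul_mem hA hB)) hB)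
  have hle : Submodule.span ℝ (Set.range (nine A B)) ≤
      Subalgebra.toSubmodule (Algebra.adjoin ℝ ({A, B} : Set (Matrix (Fin 3) (Fin 3) ℝ))) :=
    Submodule.span_le.mpr (by rintro x ⟨i, rfl⟩; exact hmem i)
  rw [← Algebra.toSubmodule_eq_top]
  exact top_unique (hsp ▸ hle)
end

section
/- For 3×3 matrices A, B over a field of characteristic zero, if H([A,B]) = 0 then the nine matrices I, A, A², B, B², AB, BA, [A,[A,B]], [B,[B,A]] are linearly dependent. -/
open Matrix Polynomial

/-!
Put `C = [A, B]`. Every one of the nine matrices `X` satisfies `tr (C X) = 0`: for `I, A, A², B, B²`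
because `tr ([A, B] X) = 0` whenever `X` commutes with `A` or with `B`; for `[A, [A, B]]` and
`[B, [B, A]]` because `tr (C [X, C]) = 0`; and for `AB`, `BA` because `tr (C (AB + BA)) = 0` always,
while `tr (C (AB - BA)) = tr (C²) = tr (C)² - 2 H(C) = 0`. If `C ≠ 0`, the trace form makes
`X ↦ tr (C X)` a nonzero functional, so the nine matrices lie in a hyperplane of the 9-dimensional
space `M₃(K)`. If `C = 0`, then `AB = BA` already repeats a matrix.
-/

namespace Matrix

section CommRing

variable {n R : Type*} [Fintype n] [CommRing R] (A B : Matrix n n R)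

theorem trace_commutator : trace (A * B - B * A) = 0 := by
  rw [trace_sub, trace_mul_comm, sub_self]

theorem trace_commutator_mul_of_commute_left {X : Matrix n n R} (hX : Commute A X) :
    trace ((A * B - B * A) * X) = 0 := by
  rw [sub_mul, trace_sub, mul_assoc B, hX.eq, ← mul_assoc, trace_mul_cycle B X A, sub_self]

theorem trace_commutator_mul_of_commute_right {X : Matrix n n R} (hX : Commute B X) :
    trace ((A * B - B * A) * X) = 0 := by
  rw [sub_mul, trace_sub, mul_assoc A, hX.eq, ← mul_assoc, trace_mul_cycle A X B, sub_self]

theorem trace_mul_commutator_self (C : Matrix n n R) : trace (C * (A * C - C * A)) = 0 := by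
  rw [mul_sub, trace_sub, ← mul_assoc, trace_mul_cycle, ← mul_assoc, sub_self]

theorem trace_commutator_mul_anticommutator :
    trace ((A * B - B * A) * (A * B + B * A)) = 0 := by
  have hsq : trace (A * B * (A * B)) = trace (B * A * (B * A)) := by
    rw [mul_assoc, trace_mul_comm, mul_assoc, mul_assoc, ← mul_assoc B A (B * A)]
  rw [sub_mul, mul_add, mul_add, trace_sub, trace_add, trace_add, hsq,
    trace_mul_comm (A * B) (B * A)]
  abel

end CommRing

section Field

variable {n K : Type*} [Fintype n] [Field K]

theorem not_linearIndependent_of_trace_mul_eq_zero {ι : Type*} [Fintype ι] {C : Matrix n n K}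
    (hC : C ≠ 0) {v : ι → Matrix n n K} (hv : ∀ i, trace (C * v i) = 0)
    (hι : Fintype.card ι = Fintype.card n * Fintype.card n) : ¬ LinearIndependent K v := by
  intro hli
  let φ := traceLinearMap n K K ∘ₗ LinearMap.mulLeft K C
  have hspan : Submodule.span K (Set.range v) ≤ LinearMap.ker φ :=
    Submodule.span_le.mpr (Set.range_subset_iff.mpr hv)
  rw [hli.span_eq_top_of_card_eq_finrank' (by simp [Module.finrank_matrix, hι])] at hspan
  refine hC (ext_iff_trace_mul_right.mpr fun X => ?_)
  simpa [φ] using hspan (Submodule.mem_top (x := X))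

theorem trace_commutator_mul_eq_zero_of_trace_sq_eq_zero [NeZero (2 : K)] (A B : Matrix n n K)
    (h : trace ((A * B - B * A) * (A * B - B * A)) = 0) :
    trace ((A * B - B * A) * (A * B)) = 0 ∧ trace ((A * B - B * A) * (B * A)) = 0 := by
  have hsum := trace_commutator_mul_anticommutator A B
  rw [mul_add, trace_add] at hsum
  rw [mul_sub, trace_sub] at h
  constructor
  · exact (mul_eq_zero.mp (by linear_combination hsum + h : (2 : K) * _ = 0)).resolve_left
      two_ne_zero
  · exact (mul_eq_zero.mp (by linear_combination hsum - h : (2 : K) * _ = 0)).resolve_left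
      two_ne_zero

end Field

end Matrix

theorem trace_mul_self_eq_zero_of_Hm_eq_zero {K : Type*} [Field K] [NeZero (2 : K)]
    {M : Matrix (Fin 3) (Fin 3) K} (hH : Hm M = 0) (htr : trace M = 0) : trace (M * M) = 0 := by
  simpa [Hm, htr, two_ne_zero] using hH

theorem trace_commutator_mul_nine_eq_zero {K : Type*} [Field K] [NeZero (2 : K)]
    (A B : Matrix (Fin 3) (Fin 3) K) (h : trace ((A * B - B * A) * (A * B - B * A)) = 0)
    (i : Fin 9) : trace ((A * B - B * A) * nine A B i) = 0 := by
  obtain ⟨hAB, hBA⟩ := trace_commutator_mul_eq_zero_of_trace_sq_eq_zero A B h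
  fin_cases i
  · exact trace_commutator_mul_of_commute_left A B (Commute.one_right A)
  · exact trace_commutator_mul_of_commute_left A B (Commute.refl A)
  · exact trace_commutator_mul_of_commute_left A B (Commute.self_pow A 2)
  · exact trace_commutator_mul_of_commute_right A B (Commute.refl B)
  · exact trace_commutator_mul_of_commute_right A B (Commute.self_pow B 2)
  · exact hAB
  · exact hBA
  · exact trace_mul_commutator_self A _
  · change trace ((A * B - B * A) * (B * (B * A - A * B) - (B * A - A * B) * B)) = 0
    rw [show B * (B * A - A * B) - (B * A - A * B) * B
        = -(B * (A * B - B * A) - (A * B - B * A) * B) by noncomm_ring,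
      mul_neg, trace_neg, trace_mul_commutator_self, neg_zero]

theorem stmt_14 {K : Type*} [Field K] [CharZero K] (A B : Matrix (Fin 3) (Fin 3) K)
    (hH : Hm (A * B - B * A) = 0) :
    ¬ LinearIndependent K (nine A B) := by
  by_cases hC : A * B - B * A = 0
  · have hrepeat : nine A B 5 = nine A B 6 := sub_eq_zero.mp hC
    exact fun hli => absurd (hli.injective hrepeat) (by decide)
  · have hsq := trace_mul_self_eq_zero_of_Hm_eq_zero hH (trace_commutator A B)
    exact not_linearIndependent_of_trace_mul_eq_zero hC
      (trace_commutator_mul_nine_eq_zero A B hsq) (by simp)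
end

section
/- Let K be a field of characteristic zero and A, B ∈ M₃(K) with det([A,B]) ≠ 0 and H([A,B]) ≠ 0. Then neither A nor B commutes with the other, and {A, B} admits no common invariant subspace of dimension 1 or 2 over the algebraic closure; in particular the pair is irreducible. -/
/-!
Endomorphisms of a line commute. So if `f` and `g` preserve a subspace `W`, their commutator
vanishes on `W` when `dim W = 1`, and maps everything into `W` when `dim (V ⧸ W) = 1`. An
invertible commutator therefore rules out both cases, which in dimension at most three leaves
only `W = ⊥` and `W = ⊤`.
-/

open Matrix Polynomial

open Module

section
variable {k V : Type*} [Field k] [AddCommGroup V] [Module k V]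

theorem Module.End.commute_of_finrank_eq_one (hV : finrank k V = 1) (f g : Module.End k V) :
    Commute f g := by
  obtain ⟨a, rfl⟩ := (f.existsUnique_eq_smul_id_of_finrank_eq_one hV).exists
  exact (Commute.one_left g).smul_left a

variable {f g : Module.End k V} {W : Submodule k V}

theorem Submodule.le_ker_commutator_of_finrank_eq_one (hf : ∀ v ∈ W, f v ∈ W)
    (hg : ∀ v ∈ W, g v ∈ W) (hW : finrank k W = 1) : W ≤ LinearMap.ker (f * g - g * f) := by
  intro w hw
  have h := LinearMap.congr_fun
    (Module.End.commute_of_finrank_eq_one hW (f.restrict hf) (g.restrict hg)).eq ⟨w, hw⟩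
  simpa [sub_eq_zero, Subtype.ext_iff, LinearMap.restrict_apply] using h

theorem Submodule.range_commutator_le_of_finrank_quotient_eq_one (hf : ∀ v ∈ W, f v ∈ W)
    (hg : ∀ v ∈ W, g v ∈ W) (hW : finrank k (V ⧸ W) = 1) :
    LinearMap.range (f * g - g * f) ≤ W := by
  rintro _ ⟨v, rfl⟩
  have h := LinearMap.congr_fun
    (Module.End.commute_of_finrank_eq_one hW (W.mapQ W f hf) (W.mapQ W g hg)).eq (W.mkQ v)
  simpa [← Submodule.Quotient.mk_sub, sub_eq_zero, Submodule.Quotient.eq] using h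

theorem Submodule.eq_bot_or_eq_top_of_bijective_commutator [FiniteDimensional k V]
    (hV : finrank k V ≤ 3) (hc : Function.Bijective (f * g - g * f))
    (hf : ∀ v ∈ W, f v ∈ W) (hg : ∀ v ∈ W, g v ∈ W) : W = ⊥ ∨ W = ⊤ := by
  have hsum := W.finrank_quotient_add_finrank
  have hrange : LinearMap.range (f * g - g * f) = ⊤ := LinearMap.range_eq_top.2 hc.2
  have hker : LinearMap.ker (f * g - g * f) = ⊥ := LinearMap.ker_eq_bot.2 hc.1
  obtain h0 | h1 | hq1 | hq0 : finrank k W = 0 ∨ finrank k W = 1 ∨ finrank k (V ⧸ W) = 1 ∨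
      finrank k (V ⧸ W) = 0 := by omega
  · exact .inl (Submodule.finrank_eq_zero.1 h0)
  · exact .inl (eq_bot_iff.2 (hker ▸ W.le_ker_commutator_of_finrank_eq_one hf hg h1))
  · exact .inr (eq_top_iff.2
      (hrange ▸ W.range_commutator_le_of_finrank_quotient_eq_one hf hg hq1))
  · exact .inr (Submodule.eq_top_of_finrank_eq (by omega))
end

theorem Matrix.bijective_mulVec_map_of_det_ne_zero {K L n : Type*} [Field K] [Field L]
    [Fintype n] [DecidableEq n] (φ : K →+* L) {M : Matrix n n K} (hM : M.det ≠ 0) :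
    Function.Bijective (M.map φ).mulVec := by
  have hunit : IsUnit (φ.mapMatrix M) := by
    rw [isUnit_iff_isUnit_det, ← RingHom.map_det]
    exact (isUnit_iff_ne_zero.2 hM).map φ
  exact ⟨mulVec_injective_iff_isUnit.2 hunit, mulVec_surjective_iff_isUnit.2 hunit⟩

theorem stmt_19_general {K : Type*} [Field K] (A B : Matrix (Fin 3) (Fin 3) K)
    (hdet : (A * B - B * A).det ≠ 0) :
    A * B ≠ B * A ∧
    ∀ W : Submodule (AlgebraicClosure K) (Fin 3 → AlgebraicClosure K),
      (∀ v ∈ W, (A.map (algebraMap K (AlgebraicClosure K))).mulVec v ∈ W) →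
      (∀ v ∈ W, (B.map (algebraMap K (AlgebraicClosure K))).mulVec v ∈ W) →
      W = ⊥ ∨ W = ⊤ := by
  refine ⟨fun hAB => hdet (by rw [hAB, sub_self, det_zero]), fun W hA hB => ?_⟩
  set φ := algebraMap K (AlgebraicClosure K)
  let toEnd := Matrix.toLinAlgEquiv' (R := AlgebraicClosure K) (n := Fin 3)
  have hc : Function.Bijective
      (toEnd (A.map φ) * toEnd (B.map φ) - toEnd (B.map φ) * toEnd (A.map φ)) := by
    rw [← map_mul, ← map_mul, ← map_sub, ← Matrix.map_mul, ← Matrix.map_mul,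
      ← Matrix.map_sub _ (map_sub φ)]
    exact bijective_mulVec_map_of_det_ne_zero φ hdet
  exact W.eq_bot_or_eq_top_of_bijective_commutator (by simp) hc hA hB

theorem stmt_19 {K : Type*} [Field K] [CharZero K] (A B : Matrix (Fin 3) (Fin 3) K)
    (hdet : (A * B - B * A).det ≠ 0) (hH : Hm (A * B - B * A) ≠ 0) :
    A * B ≠ B * A ∧
    ∀ W : Submodule (AlgebraicClosure K) (Fin 3 → AlgebraicClosure K),
      (∀ v ∈ W, (A.map (algebraMap K (AlgebraicClosure K))).mulVec v ∈ W) →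
      (∀ v ∈ W, (B.map (algebraMap K (AlgebraicClosure K))).mulVec v ∈ W) →
      W = ⊥ ∨ W = ⊤ :=
  stmt_19_general A B hdet
end
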